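/- arXiv:2001.04339 — 5 statements merged into one kernel-verified Lean document; each statement's English description precedes it below -/
import Mathlib

section
/- A simplicial subset of a regular simplicial set is regular. -/
open CategoryTheory GrothendieckTopology Simplicial Opposite Limits

namespace SSet

/-- Naturality of the Yoneda bijection for simplicial sets. -/
lemma yonedaEquiv_symm_naturality' {m n : SimplexCategory} (f : m ⟶ n) (X : SSet)
    (y : X.obj (op n)) :
    SSet.stdSimplex.map f ≫ (yonedaEquiv (X := X) (n := n)).symm y = (yonedaEquiv (X := X) (n := m)).symm (X.map f.op y) := by
  ext k x
  show X.map (x.down ≫ f).op y = X.map x.down.op (X.map f.op y)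
  rw [op_comp, FunctorToTypes.map_comp_apply]

variable (X : SSet)

/-- A simplex is degenerate if it is the image of a simplex of strictly lower degree
under a simplicial operator. -/
def Degenerate {n : ℕ} (y : X _⦋n⦌) : Prop :=
  ∃ (m : ℕ) (σ : (⦋n⦌ : SimplexCategory) ⟶ ⦋m⦌) (z : X _⦋m⦌), m < n ∧ y = X.map σ.op z

/-- A simplex is non-degenerate if it is not degenerate. -/
def Nondegenerate {n : ℕ} (y : X _⦋n⦌) : Prop := ¬ X.Degenerate y

/-- The representing map `Δ[n] ⟶ X` of the `(n+1)`-st face `y ∘ δₙ₊₁` of an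
`(n+1)`-simplex `y` of `X`. -/
noncomputable def lastFaceMap {n : ℕ} (y : X _⦋n+1⦌) : Δ[n] ⟶ X :=
  (yonedaEquiv (X := X) (n := ⦋n⦌)).symm (X.map (SimplexCategory.δ (Fin.last (n+1))).op y)

/-- The canonical map `Δ[n+1] ⊔_{Δ[n]} Y' ⟶ X`, where `Y'` is the simplicial subset of `X`
generated by the last face of `y` (i.e. the image of the representing map of that face). -/
noncomputable def regularityMap {n : ℕ} (y : X _⦋n+1⦌) :
    pushout (SSet.stdSimplex.{u_1}.map (SimplexCategory.δ (Fin.last (n+1))))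
      (Subfunctor.toRange (X.lastFaceMap y)) ⟶ X :=
  pushout.desc ((yonedaEquiv (X := X) (n := ⦋n+1⦌)).symm y) (Subfunctor.range (X.lastFaceMap y)).ι
    (by rw [yonedaEquiv_symm_naturality']; exact (Subfunctor.toRange_ι _).symm)

/-- A simplicial set is regular if, for each of its non-degenerate simplices `y`,
the canonical map from the pushout `Δ[n+1] ⊔_{Δ[n]} Y'` to `X` is degreewise injective. -/
def IsRegular : Prop :=
  ∀ (n : ℕ) (y : X _⦋n+1⦌), X.Nondegenerate y →
    ∀ (k : SimplexCategoryᵒᵖ), Function.Injective ((X.regularityMap y).app k)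

end SSet

/-!
A monomorphism `f : Y ⟶ X` preserves non-degenerate simplices, and for a simplex `y` of `Y` it
restricts to an isomorphism from the image of the last face of `y` onto the image of the last
face of `f y`. Hence the pushout defining the regularity map of `y` is isomorphic to the one of
`f y`, and under this isomorphism `Y.regularityMap y ≫ f` becomes the monomorphism
`X.regularityMap (f y)`; so `Y.regularityMap y` is a monomorphism as well.
-/

universe u

namespace SSet

variable {X Y Z : SSet.{u}}

section

noncomputable def rangeMapOfFac {g : Z ⟶ Y} {f : Y ⟶ X} {g' : Z ⟶ X} (fac : g ≫ f = g') :
    (Subfunctor.range g).toFunctor ⟶ (Subfunctor.range g').toFunctor :=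
  Subfunctor.lift ((Subfunctor.range g).ι ≫ f)
    (by rw [← fac, Subfunctor.range_comp, Subfunctor.range_ι, ← Subfunctor.range_comp])

variable {g : Z ⟶ Y} {f : Y ⟶ X} {g' : Z ⟶ X} (fac : g ≫ f = g')

lemma rangeMapOfFac_ι : rangeMapOfFac fac ≫ (Subfunctor.range g').ι = (Subfunctor.range g).ι ≫ f :=
  Subfunctor.lift_ι _ _

lemma toRange_comp_rangeMapOfFac :
    Subfunctor.toRange g ≫ rangeMapOfFac fac = Subfunctor.toRange g' := by
  rw [← cancel_mono (Subfunctor.range g').ι, Category.assoc, rangeMapOfFac_ι, ← fac]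
  rfl

-- `SSet` is balanced, so a monomorphism that is an epimorphism is an isomorphism.
instance [Mono f] : IsIso (rangeMapOfFac fac) :=
  have : Mono (rangeMapOfFac fac) := mono_of_mono_fac (rangeMapOfFac_ι fac)
  have : Epi (rangeMapOfFac fac) := epi_of_epi_fac (toRange_comp_rangeMapOfFac fac)
  isIso_of_mono_of_epi (C := SSet.{u}) _

end

lemma degenerate_iff_mem_degenerate {n : ℕ} (y : X _⦋n⦌) :
    X.Degenerate y ↔ y ∈ X.degenerate n := by
  constructor
  · rintro ⟨m, σ, z, hm, rfl⟩
    exact ⟨m, hm, σ, z, rfl⟩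
  · rintro ⟨m, hm, σ, z, rfl⟩
    exact ⟨m, σ, z, hm, rfl⟩

lemma Nondegenerate.app_of_mono (f : Y ⟶ X) [Mono f] {n : ℕ} {y : Y _⦋n⦌}
    (hy : Y.Nondegenerate y) : X.Nondegenerate (f.app _ y) := by
  rw [Nondegenerate, degenerate_iff_mem_degenerate, degenerate_iff_of_mono]
  rwa [Nondegenerate, degenerate_iff_mem_degenerate] at hy

lemma isRegular_iff_mono :
    X.IsRegular ↔ ∀ (n : ℕ) (y : X _⦋n+1⦌), X.Nondegenerate y → Mono (X.regularityMap y) := by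
  simp only [IsRegular, NatTrans.mono_iff_mono_app, mono_iff_injective]

lemma lastFaceMap_comp (f : Y ⟶ X) {n : ℕ} (y : Y _⦋n+1⦌) :
    Y.lastFaceMap y ≫ f = X.lastFaceMap (f.app _ y) := by
  rw [lastFaceMap, lastFaceMap, yonedaEquiv_symm_comp, NatTrans.naturality_apply]

noncomputable def regularityPushoutMap (f : Y ⟶ X) {n : ℕ} (y : Y _⦋n+1⦌) :
    pushout (SSet.stdSimplex.map (SimplexCategory.δ (Fin.last (n+1))))
        (Subfunctor.toRange (Y.lastFaceMap y)) ⟶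
      pushout (SSet.stdSimplex.map (SimplexCategory.δ (Fin.last (n+1))))
        (Subfunctor.toRange (X.lastFaceMap (f.app _ y))) :=
  pushout.map _ _ _ _ (𝟙 _) (rangeMapOfFac (lastFaceMap_comp f y)) (𝟙 _)
    (by rw [Category.comp_id, Category.id_comp])
    (by rw [toRange_comp_rangeMapOfFac, Category.id_comp])

lemma regularityPushoutMap_comp_regularityMap (f : Y ⟶ X) {n : ℕ} (y : Y _⦋n+1⦌) :
    regularityPushoutMap f y ≫ X.regularityMap (f.app _ y) = Y.regularityMap y ≫ f := by
  ext : 1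
  · rw [regularityPushoutMap, pushout.inl_desc_assoc, Category.id_comp, regularityMap,
      regularityMap, pushout.inl_desc, pushout.inl_desc_assoc, yonedaEquiv_symm_comp]
  · rw [regularityPushoutMap, pushout.inr_desc_assoc, regularityMap, regularityMap,
      Category.assoc, pushout.inr_desc, pushout.inr_desc_assoc, rangeMapOfFac_ι]

instance (f : Y ⟶ X) [Mono f] {n : ℕ} (y : Y _⦋n+1⦌) : IsIso (regularityPushoutMap f y) := by
  unfold regularityPushoutMap
  infer_instance

lemma IsRegular.of_mono (f : Y ⟶ X) [Mono f] (hX : X.IsRegular) : Y.IsRegular := by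
  rw [isRegular_iff_mono] at hX ⊢
  intro n y hy
  have := hX n _ (hy.app_of_mono f)
  have : Mono (Y.regularityMap y ≫ f) := by
    rw [← regularityPushoutMap_comp_regularityMap]
    infer_instance
  exact mono_of_mono _ f

end SSet

/-- A simplicial subset of a regular simplicial set is regular. -/
theorem subcomplex_isRegular_of_isRegular (X : SSet)
    (A : Subfunctor (X : SimplexCategoryᵒᵖ ⥤ Type _)) (hX : X.IsRegular) :
    SSet.IsRegular A.toFunctor :=
  hX.of_mono A.ι
end

section
/- Let F : J → Cat be a functor from a small category to the category of small categories with colimit L, and let X be the colimit in simplicial sets of the composite N ∘ F, where N is the nerve functor. Then the canonical map X → N(L) is a bijection on 0-simplices. -/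
/-!
On `0`-simplices the nerve is the object set: `N(C)₀ ≅ Ob C` naturally in `C`. The objects functor
`Cat ⥤ Type` is left adjoint to the codiscrete-category functor, so it preserves colimits; and
evaluation at `[0]` preserves colimits of simplicial sets. Hence both `X₀` and `N(L)₀` are colimits
of the same diagram `j ↦ Ob (F j)`, and the comparison map is the induced map between them.
-/

open CategoryTheory Simplicial Opposite Limits

universe u

namespace CategoryTheory

def Cat.codiscrete : Type u ⥤ Cat.{u, u} :=
  Codiscrete.functorToCat.{u} ⋙ Cat.asSmallFunctor.{u}

def Cat.objectsAdjCodiscrete : Cat.objects.{u, u} ⊣ Cat.codiscrete.{u} :=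
  Adjunction.mkOfHomEquiv
    { homEquiv _ _ :=
        { toFun f := (Codiscrete.functor f ⋙ AsSmall.up).toCatHom
          invFun g := ↾(Codiscrete.as ∘ AsSmall.down.obj ∘ g.toFunctor.obj)
          left_inv _ := rfl
          right_inv _ := Cat.Hom.ext (Functor.ext (fun _ => rfl) (fun _ _ _ => rfl)) }
      homEquiv_naturality_left_symm _ _ := rfl
      homEquiv_naturality_right _ _ := rfl }

instance : Cat.objects.{u, u}.IsLeftAdjoint := Cat.objectsAdjCodiscrete.isLeftAdjoint

def nerveObjZeroIso :
    nerveFunctor.{u, u} ⋙ (evaluation SimplexCategoryᵒᵖ (Type u)).obj (op ⦋0⦌) ≅ Cat.objects :=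
  NatIso.ofComponents (fun _ => nerveEquiv.toIso) (fun _ => rfl)

instance : PreservesColimits
    (nerveFunctor.{u, u} ⋙ (evaluation SimplexCategoryᵒᵖ (Type u)).obj (op ⦋0⦌)) :=
  preservesColimits_of_natIso nerveObjZeroIso.symm

theorem Limits.IsColimit.isIso_map_desc_mapCocone {J C D E : Type*} [Category J] [Category C]
    [Category D] [Category E] {F : J ⥤ C} {c : Cocone F} (hc : IsColimit c) (H : C ⥤ D)
    (G : D ⥤ E) {s : Cocone (F ⋙ H)} (hs : IsColimit s) [PreservesColimit (F ⋙ H) G]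
    [PreservesColimit F (H ⋙ G)] :
    IsIso (G.map (hs.desc (H.mapCocone c))) := by
  let φ := G.mapCoconeMorphism (hs.descCoconeMorphism (H.mapCocone c))
  have : IsIso φ := (isColimitOfPreserves G hs).hom_isIso (isColimitOfPreserves (H ⋙ G) hc) φ
  exact (Cocone.forget _).map_isIso φ

end CategoryTheory

/-- Let `F : J ⥤ Cat` have colimit `c.pt`, and let `X` be the colimit in simplicial sets of
`F ⋙ N`, where `N` is the nerve functor. The canonical map `X ⟶ N(c.pt)` is a bijection
on `0`-simplices. -/
theorem nerve_colimit_comparison_bijective_degree_zero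
    {J : Type u} [SmallCategory J] (F : J ⥤ Cat.{u, u})
    (c : Cocone F) (hc : IsColimit c) :
    Function.Bijective
      ((colimit.desc (F ⋙ nerveFunctor.{u, u}) (nerveFunctor.{u, u}.mapCocone c)).app
        (op (⦋0⦌ : SimplexCategory))) :=
  (isIso_iff_bijective _).mp <|
    hc.isIso_map_desc_mapCocone nerveFunctor ((evaluation _ _).obj (op ⦋0⦌)) (colimit.isColimit _)
end

section
/- If P → Q is a Dwyer map of posets and P → R is any order-preserving map, then the pushout Q ⊔_P R computed in the category of small categories is a poset. -/
open CategoryTheory Limits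

universe u

/-- A monotone map of posets is a Dwyer map if it is an order embedding onto a sieve
(lower set) and it factors through a cosieve (upper set) `W` in `Q` in which `P` is
coreflective (the inclusion has a right adjoint). -/
structure IsDwyerMap {P Q : Type u} [PartialOrder P] [PartialOrder Q] (f : P →o Q) : Prop where
  inj : Function.Injective f
  reflects : ∀ p p', f p ≤ f p' → p ≤ p'
  sieve : ∀ (q : Q) (p : P), q ≤ f p → ∃ p', f p' = q
  cosieve : ∃ W : Set Q, IsUpperSet W ∧ Set.range f ⊆ W ∧
    ∃ r : W → P, ∀ (p : P) (w : W), f p ≤ (w : Q) ↔ p ≤ r w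

/-!
Besides the pushout `C`, the square has an explicit cocone: the poset `R ⊔ (Q ∖ k(P))`, in which
`x ≤ q` (for `x ∈ R`, `q ∉ k(P)`) iff `x ≤ φ p` for some `k p ≤ q`. The pushout property gives a
functor `T` from `C` to this poset. Conversely, every cocone `(F₁, F₂)` over the square extends
along the poset: the morphism `F₂ x ⟶ F₁ q` is routed through the greatest such `p`, namely `r q`
for the coreflection `r : W → P`, and this choice is functorial because `r` is monotone and right
adjoint to `k`. For the pushout cocone this yields `L` with `T ⋙ L = 𝟭 C`, and a retract of a
poset is a poset.
-/

namespace CategoryTheory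

def Functor.ofLE {α D : Type*} [Preorder α] [Category D] (obj : α → D)
    (map : ∀ {a b : α}, a ≤ b → (obj a ⟶ obj b))
    (map_refl : ∀ a, map (le_refl a) = 𝟙 (obj a))
    (map_trans : ∀ {a b c : α} (hab : a ≤ b) (hbc : b ≤ c),
      map (hab.trans hbc) = map hab ≫ map hbc) :
    α ⥤ D where
  obj := obj
  map f := map (leOfHom f)
  map_id a := map_refl a
  map_comp f g := map_trans (leOfHom f) (leOfHom g)

theorem Functor.map_homOfLE_heq {α D : Type*} [Preorder α] [Category D] (F : α ⥤ D)
    {a a' b b' : α} (ea : a = a') (eb : b = b') (h : a ≤ b) (h' : a' ≤ b') :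
    F.map (homOfLE h) ≍ F.map (homOfLE h') := by
  subst ea eb
  rfl

theorem Functor.subsingleton_hom_of_comp_eq_id {C D : Type*} [Category C] [Category D]
    [Quiver.IsThin D] {T : C ⥤ D} {L : D ⥤ C} (h : T ⋙ L = 𝟭 C) (a b : C) :
    Subsingleton (a ⟶ b) :=
  haveI := Functor.Faithful.of_comp_eq h
  ⟨fun _ _ => T.map_injective (Subsingleton.elim _ _)⟩

theorem Functor.eq_of_hom_of_comp_eq_id {C D : Type*} [Category C] [PartialOrder D]
    {T : C ⥤ D} {L : D ⥤ C} (h : T ⋙ L = 𝟭 C) {a b : C} (f : a ⟶ b) (g : b ⟶ a) : a = b :=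
  calc a = L.obj (T.obj a) := (Functor.congr_obj h a).symm
    _ = L.obj (T.obj b) := congrArg L.obj (le_antisymm (leOfHom (T.map f)) (leOfHom (T.map g)))
    _ = b := Functor.congr_obj h b

end CategoryTheory

namespace IsDwyerMap

variable {P Q : Type u} [PartialOrder P] [PartialOrder Q] {k : P →o Q} (hk : IsDwyerMap k)

noncomputable def W : Set Q := hk.cosieve.choose

noncomputable def retraction : hk.W → P := hk.cosieve.choose_spec.2.2.choose

theorem isUpperSet_W : IsUpperSet hk.W := hk.cosieve.choose_spec.1

theorem le_retraction_iff (p : P) (w : hk.W) : k p ≤ w ↔ p ≤ hk.retraction w :=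
  hk.cosieve.choose_spec.2.2.choose_spec p w

theorem mem_W_of_le {p : P} {q : Q} (h : k p ≤ q) : q ∈ hk.W :=
  hk.isUpperSet_W h (hk.cosieve.choose_spec.2.1 ⟨p, rfl⟩)

theorem apply_retraction_le (w : hk.W) : k (hk.retraction w) ≤ w :=
  (hk.le_retraction_iff _ w).2 le_rfl

theorem monotone_retraction : Monotone hk.retraction := fun _ w' h =>
  (hk.le_retraction_iff _ w').1 ((hk.apply_retraction_le _).trans h)

end IsDwyerMap

variable {P Q R : Type u} [PartialOrder P] [PartialOrder Q] [PartialOrder R]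

inductive PushoutPoset (k : P →o Q) (φ : P →o R) : Type u
  | inr : R → PushoutPoset k φ
  | ofQ (q : Q) : q ∉ Set.range k → PushoutPoset k φ

namespace PushoutPoset

variable {k : P →o Q} {φ : P →o R}

protected def le : PushoutPoset k φ → PushoutPoset k φ → Prop
  | inr x, inr y => x ≤ y
  | inr x, ofQ q _ => ∃ p, k p ≤ q ∧ x ≤ φ p
  | ofQ _ _, inr _ => False
  | ofQ q _, ofQ q' _ => q ≤ q'

instance : PartialOrder (PushoutPoset k φ) where
  le := PushoutPoset.le
  le_refl
    | inr x => le_refl x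
    | ofQ q _ => le_refl q
  le_trans
    | inr _, inr _, inr _, h₁, h₂ => le_trans (α := R) h₁ h₂
    | inr _, inr _, ofQ _ _, h₁, ⟨p, hp, h₂⟩ => ⟨p, hp, le_trans (α := R) h₁ h₂⟩
    | inr _, ofQ _ _, ofQ _ _, ⟨p, hp, h₁⟩, h₂ => ⟨p, hp.trans h₂, h₁⟩
    | ofQ _ _, ofQ _ _, ofQ _ _, h₁, h₂ => le_trans (α := Q) h₁ h₂
    | _, ofQ _ _, inr _, _, h => h.elim
    | ofQ _ _, inr _, _, h, _ => h.elim
  le_antisymm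
    | inr _, inr _, h₁, h₂ => congrArg inr (le_antisymm h₁ h₂)
    | ofQ _ _, ofQ _ _, h₁, h₂ => by cases le_antisymm (α := Q) h₁ h₂; rfl
    | inr _, ofQ _ _, _, h => h.elim
    | ofQ _ _, inr _, h, _ => h.elim

theorem inr_le_inr {x y : R} : (inr x : PushoutPoset k φ) ≤ inr y ↔ x ≤ y := Iff.rfl

theorem ofQ_le_ofQ {q q' : Q} {hq : q ∉ Set.range k} {hq' : q' ∉ Set.range k} :
    (ofQ q hq : PushoutPoset k φ) ≤ ofQ q' hq' ↔ q ≤ q' := Iff.rfl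

theorem not_ofQ_le_inr {q : Q} {hq : q ∉ Set.range k} {x : R} :
    ¬ (ofQ q hq : PushoutPoset k φ) ≤ inr x := id

theorem monotone_inr : Monotone (inr : R → PushoutPoset k φ) := fun _ _ => inr_le_inr.2

variable (hk : IsDwyerMap k)

theorem inr_le_ofQ_iff {x : R} {q : Q} (hq : q ∉ Set.range k) :
    inr x ≤ (ofQ q hq : PushoutPoset k φ) ↔ ∃ hw : q ∈ hk.W, x ≤ φ (hk.retraction ⟨q, hw⟩) := by
  refine ⟨fun ⟨p, hpq, hxp⟩ => ⟨hk.mem_W_of_le hpq, ?_⟩, fun ⟨hw, hx⟩ => ?_⟩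
  · exact hxp.trans (φ.monotone ((hk.le_retraction_iff p _).1 hpq))
  · exact ⟨_, hk.apply_retraction_le ⟨q, hw⟩, hx⟩

open Classical in
noncomputable def inl (q : Q) : PushoutPoset k φ :=
  if h : q ∈ Set.range k then inr (φ h.choose) else ofQ q h

theorem inl_apply_k (hinj : Function.Injective k) (p : P) :
    (inl (k p) : PushoutPoset k φ) = inr (φ p) := by
  have h : k p ∈ Set.range k := ⟨p, rfl⟩
  rw [inl, dif_pos h, hinj h.choose_spec]

theorem inl_of_notMem {q : Q} (hq : q ∉ Set.range k) :
    (inl q : PushoutPoset k φ) = ofQ q hq :=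
  dif_neg hq

include hk in
theorem monotone_inl : Monotone (inl : Q → PushoutPoset k φ) := by
  intro q q' h
  by_cases hq' : q' ∈ Set.range k
  · obtain ⟨p', rfl⟩ := hq'
    obtain ⟨p, rfl⟩ := hk.sieve q p' h
    rw [inl_apply_k hk.inj, inl_apply_k hk.inj]
    exact φ.monotone (hk.reflects p p' h)
  · rw [inl_of_notMem hq']
    by_cases hq : q ∈ Set.range k
    · obtain ⟨p, rfl⟩ := hq
      rw [inl_apply_k hk.inj]
      exact ⟨p, h, le_rfl⟩
    · rw [inl_of_notMem hq]
      exact h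

theorem condition :
    k.monotone.functor ⋙ (monotone_inl hk).functor =
      φ.monotone.functor ⋙ (monotone_inr : Monotone (inr : R → PushoutPoset k φ)).functor :=
  CategoryTheory.Functor.ext (fun p => inl_apply_k hk.inj p) (fun _ _ _ => Subsingleton.elim _ _)

variable {D : Type*} [Category D]
  (F₁ : Q ⥤ D) (F₂ : R ⥤ D) (hF : k.monotone.functor ⋙ F₁ = φ.monotone.functor ⋙ F₂)

include hF in
theorem commSq_obj (p : P) : F₁.obj (k p) = F₂.obj (φ p) :=
  Functor.congr_obj hF p

theorem commSq_map {p p' : P} (hp : p ≤ p') :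
    F₁.map (homOfLE (k.monotone hp)) = eqToHom (commSq_obj F₁ F₂ hF p) ≫
      F₂.map (homOfLE (φ.monotone hp)) ≫ eqToHom (commSq_obj F₁ F₂ hF p').symm :=
  Functor.congr_hom hF (homOfLE hp)

abbrev liftObj : PushoutPoset k φ → D
  | inr x => F₂.obj x
  | ofQ q _ => F₁.obj q

noncomputable def transfer {p : P} {q : Q} (h : k p ≤ q) : F₂.obj (φ p) ⟶ F₁.obj q :=
  eqToHom (commSq_obj F₁ F₂ hF p).symm ≫ F₁.map (homOfLE h)

theorem transfer_comp_map {p : P} {q q' : Q} (h : k p ≤ q) (h' : q ≤ q') :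
    transfer F₁ F₂ hF h ≫ F₁.map (homOfLE h') = transfer F₁ F₂ hF (h.trans h') := by
  rw [transfer, transfer, Category.assoc, ← F₁.map_comp, homOfLE_comp]

theorem map_comp_transfer {p p' : P} {q : Q} (hp : p ≤ p') (h : k p' ≤ q) :
    F₂.map (homOfLE (φ.monotone hp)) ≫ transfer F₁ F₂ hF h =
      transfer F₁ F₂ hF ((k.monotone hp).trans h) := by
  rw [transfer, transfer, ← homOfLE_comp (k.monotone hp) h, F₁.map_comp, commSq_map F₁ F₂ hF hp]
  simp

noncomputable def liftMap : ∀ {a b : PushoutPoset k φ}, a ≤ b → (liftObj F₁ F₂ a ⟶ liftObj F₁ F₂ b)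
  | inr _, inr _, h => F₂.map (homOfLE (inr_le_inr.1 h))
  | inr _, ofQ q hq, h =>
    have h' := (inr_le_ofQ_iff hk hq).1 h
    F₂.map (homOfLE h'.snd) ≫ transfer F₁ F₂ hF (hk.apply_retraction_le ⟨q, h'.fst⟩)
  | ofQ _ _, inr _, h => (not_ofQ_le_inr h).elim
  | ofQ _ _, ofQ _ _, h => F₁.map (homOfLE (ofQ_le_ofQ.1 h))

theorem liftMap_trans : ∀ {a b c : PushoutPoset k φ} (hab : a ≤ b) (hbc : b ≤ c),
    liftMap hk F₁ F₂ hF (hab.trans hbc) = liftMap hk F₁ F₂ hF hab ≫ liftMap hk F₁ F₂ hF hbc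
  | inr _, inr _, inr _, _, _ => (F₂.map_comp _ _)
  | inr _, inr _, ofQ _ _, _, _ => by
    simp only [liftMap]
    rw [← Category.assoc, ← F₂.map_comp, homOfLE_comp]
  | inr _, ofQ q hq, ofQ q' hq', hab, hbc => by
    obtain ⟨hw, hx⟩ := (inr_le_ofQ_iff hk hq).1 hab
    have hqq' := ofQ_le_ofQ.1 hbc
    have hr : hk.retraction ⟨q, hw⟩ ≤ hk.retraction ⟨q', hk.isUpperSet_W hqq' hw⟩ :=
      hk.monotone_retraction hqq'
    simp only [liftMap]
    rw [Category.assoc, transfer_comp_map, ← homOfLE_comp hx (φ.monotone hr), F₂.map_comp,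
      Category.assoc, map_comp_transfer _ _ _ hr]
  | ofQ _ _, ofQ _ _, ofQ _ _, _, _ => (F₁.map_comp _ _)
  | _, ofQ _ _, inr _, _, h => (not_ofQ_le_inr h).elim
  | ofQ _ _, inr _, _, h, _ => (not_ofQ_le_inr h).elim

noncomputable def lift : PushoutPoset k φ ⥤ D :=
  Functor.ofLE (liftObj F₁ F₂) (liftMap hk F₁ F₂ hF)
    (fun | inr x => F₂.map_id x | ofQ q _ => F₁.map_id q)
    (liftMap_trans hk F₁ F₂ hF)

theorem inr_comp_lift : monotone_inr.functor ⋙ lift hk F₁ F₂ hF = F₂ :=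
  CategoryTheory.Functor.hext (fun _ => rfl) (fun _ _ _ => HEq.rfl)

theorem lift_obj_inl (q : Q) : (lift hk F₁ F₂ hF).obj (inl q) = F₁.obj q := by
  by_cases hq : q ∈ Set.range k
  · obtain ⟨p, rfl⟩ := hq
    rw [inl_apply_k hk.inj]
    exact (commSq_obj F₁ F₂ hF p).symm
  · rw [inl_of_notMem hq]
    rfl

theorem inl_comp_lift : (monotone_inl hk).functor ⋙ lift hk F₁ F₂ hF = F₁ := by
  refine CategoryTheory.Functor.hext (lift_obj_inl hk F₁ F₂ hF) (fun q q' f => ?_)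
  have h := leOfHom f
  change (lift hk F₁ F₂ hF).map (homOfLE (monotone_inl hk h)) ≍ F₁.map (homOfLE h)
  by_cases hq' : q' ∈ Set.range k
  · obtain ⟨p', rfl⟩ := hq'
    obtain ⟨p, rfl⟩ := hk.sieve q p' h
    have hp := hk.reflects p p' h
    exact (Functor.map_homOfLE_heq _ (inl_apply_k hk.inj p) (inl_apply_k hk.inj p') _
      (inr_le_inr.2 (φ.monotone hp))).trans (Functor.hcongr_hom hF (homOfLE hp)).symm
  by_cases hq : q ∈ Set.range k
  · obtain ⟨p, rfl⟩ := hq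
    have hw := hk.mem_W_of_le h
    have hp := (hk.le_retraction_iff p ⟨q', hw⟩).1 h
    refine (Functor.map_homOfLE_heq _ (inl_apply_k hk.inj p) (inl_of_notMem hq') _
      ((inr_le_ofQ_iff hk hq').2 ⟨hw, φ.monotone hp⟩)).trans ?_
    change F₂.map _ ≫ transfer F₁ F₂ hF _ ≍ _
    rw [map_comp_transfer F₁ F₂ hF hp, transfer]
    exact eqToHom_comp_heq _ _
  · exact Functor.map_homOfLE_heq _ (inl_of_notMem hq) (inl_of_notMem hq') _ (ofQ_le_ofQ.2 h)

end PushoutPoset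

open PushoutPoset in
/-- If `P ⟶ Q` is a Dwyer map of posets and `P ⟶ R` is any order-preserving map, then the
pushout `Q ⊔_P R` computed in the category of small categories is a poset (it is thin, and
mutually inverse morphisms have equal endpoints). -/
theorem pushout_along_dwyer_isPoset
    {P Q R : Type u} [PartialOrder P] [PartialOrder Q] [PartialOrder R]
    (k : P →o Q) (φ : P →o R) (hk : IsDwyerMap k)
    (C : Cat.{u, u}) (g₁ : Cat.of Q ⟶ C) (g₂ : Cat.of R ⟶ C)
    (sq : IsPushout (show Cat.of P ⟶ Cat.of Q from k.monotone.functor.toCatHom)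
      (show Cat.of P ⟶ Cat.of R from φ.monotone.functor.toCatHom) g₁ g₂) :
    (∀ a b : C, Subsingleton (a ⟶ b)) ∧ ∀ a b : C, (a ⟶ b) → (b ⟶ a) → a = b := by
  let F₁ : Q ⥤ C := g₁.toFunctor
  let F₂ : R ⥤ C := g₂.toFunctor
  have hF : k.monotone.functor ⋙ F₁ = φ.monotone.functor ⋙ F₂ := congrArg Cat.Hom.toFunctor sq.w
  let L : Cat.of (PushoutPoset k φ) ⟶ C := (lift hk F₁ F₂ hF).toCatHom
  obtain ⟨T, hT₁, hT₂⟩ : ∃ T : C ⟶ Cat.of (PushoutPoset k φ),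
      g₁ ≫ T = (monotone_inl hk).functor.toCatHom ∧ g₂ ≫ T = monotone_inr.functor.toCatHom :=
    ⟨_, sq.inl_desc _ _ (congrArg Functor.toCatHom (condition hk)), sq.inr_desc ..⟩
  have hTL : T ≫ L = 𝟙 C := by
    refine sq.hom_ext ?_ ?_
    · rw [reassoc_of% hT₁, Category.comp_id]
      exact congrArg Functor.toCatHom (inl_comp_lift hk F₁ F₂ hF)
    · rw [reassoc_of% hT₂, Category.comp_id]
      exact congrArg Functor.toCatHom (inr_comp_lift hk F₁ F₂ hF)
  have hTL' : T.toFunctor ⋙ lift hk F₁ F₂ hF = 𝟭 C := congrArg Cat.Hom.toFunctor hTL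
  exact ⟨Functor.subsingleton_hom_of_comp_eq_id (D := PushoutPoset k φ) hTL',
    fun _ _ f g => Functor.eq_of_hom_of_comp_eq_id (D := PushoutPoset k φ) hTL' f g⟩
end

section
/- Let P → Q and P → R be a span of posets in which both legs are sieves. Then the nerve functor N : Cat → sSet preserves the pushout, i.e., NQ ⊔_{NP} NR → N(Q ⊔_P R) is an isomorphism. -/
open CategoryTheory Simplicial Opposite Limits

universe u

/-- A monotone map of posets is a sieve embedding if it is an order embedding whose range
is a lower set. -/
structure IsSieveEmbedding {P Q : Type u} [PartialOrder P] [PartialOrder Q] (f : P →o Q) :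
    Prop where
  inj : Function.Injective f
  reflects : ∀ p p', f p ≤ f p' → p ≤ p'
  sieve : ∀ (q : Q) (p : P), q ≤ f p → ∃ p', f p' = q

namespace SievePushoutAux

variable {P Q R : Type u} [PartialOrder P] [PartialOrder Q] [PartialOrder R]
  (f : P →o Q) (g : P →o R)

/-- Model for the pushout of posets along sieves. -/
def Mdl (_f : P →o Q) (g : P →o R) : Type u := Q ⊕ {r : R // ¬∃ p, g p = r}

/-- The order on the model. -/
@[reducible] def Le : Mdl f g → Mdl f g → Prop := fun x y => match x, y with
  | .inl q, .inl q' => q ≤ q'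
  | .inl q, .inr r => ∃ p, q ≤ f p ∧ g p ≤ r.1
  | .inr _, .inl _ => False
  | .inr r, .inr r' => r.1 ≤ r'.1

instance : Preorder (Mdl f g) where
  le := Le f g
  le_refl x := by cases x with
    | inl q => exact le_refl q
    | inr r => exact le_refl r.1
  le_trans x y z h1 h2 := by
    cases x with
    | inl q =>
      cases y with
      | inl q' =>
        cases z with
        | inl q'' => exact le_trans (α := Q) h1 h2
        | inr r =>
          obtain ⟨p, hp1, hp2⟩ := h2
          exact ⟨p, le_trans (α := Q) h1 hp1, hp2⟩
      | inr r =>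
        cases z with
        | inl q'' => exact h2.elim
        | inr r' =>
          obtain ⟨p, hp1, hp2⟩ := h1
          exact ⟨p, hp1, le_trans (α := R) hp2 h2⟩
    | inr r =>
      cases y with
      | inl q' => exact h1.elim
      | inr r' =>
        cases z with
        | inl q'' => exact h2.elim
        | inr r'' => exact le_trans (α := R) h1 h2

/-- Inclusion of `Q` in the model. -/
@[reducible] def inlM (q : Q) : Mdl f g := Sum.inl q

/-- Inclusion of the complement of `R` in the model. -/
@[reducible] def inrM (r : {r : R // ¬∃ p, g p = r}) : Mdl f g := Sum.inr r

lemma Mdl.casesOn' {f : P →o Q} {g : P →o R} {motive : Mdl f g → Prop} (x : Mdl f g)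
    (inl : ∀ q, motive (inlM f g q)) (inr : ∀ r, motive (inrM f g r)) : motive x := by
  cases x with
  | inl q => exact inl q
  | inr r => exact inr r

lemma inl_le_inl {q q' : Q} (h : q ≤ q') : inlM f g q ≤ inlM f g q' := h

lemma le_of_inl_le_inl {q q' : Q} (h : inlM f g q ≤ inlM f g q') : q ≤ q' := h

lemma le_of_inr_le_inr {r r'} (h : inrM f g r ≤ inrM f g r') : r.1 ≤ r'.1 := h

lemma not_inr_le_inl {r q} (h : inrM f g r ≤ inlM f g q) : False := h

lemma inl_le_inr_iff {q r} : inlM f g q ≤ inrM f g r ↔ ∃ p, q ≤ f p ∧ g p ≤ r.1 := Iff.rfl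

lemma inl_mono : Monotone (inlM f g) := fun _ _ h => h

/-- The map `R → Mdl f g`. -/
noncomputable def inRfun : R → Mdl f g := fun r =>
  @dite _ (∃ p, g p = r) (Classical.dec _) (fun h => inlM f g (f h.choose))
    (fun h => inrM f g ⟨r, h⟩)

lemma inRfun_mem (hg : IsSieveEmbedding g) (p : P) : inRfun f g (g p) = inlM f g (f p) := by
  have h : ∃ p', g p' = g p := ⟨p, rfl⟩
  simp only [inRfun]
  rw [dif_pos h]
  exact congrArg (inlM f g) (congrArg f (hg.inj h.choose_spec))

lemma inRfun_not_mem (r : R) (h : ¬∃ p, g p = r) : inRfun f g r = inrM f g ⟨r, h⟩ := by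
  simp only [inRfun]
  rw [dif_neg h]

lemma inRfun_mono (hf : IsSieveEmbedding f) (hg : IsSieveEmbedding g) :
    Monotone (inRfun f g) := by
  intro r r' h
  by_cases h' : ∃ p', g p' = r'
  · obtain ⟨p', rfl⟩ := h'
    obtain ⟨p, rfl⟩ := hg.sieve r p' h
    rw [inRfun_mem f g hg, inRfun_mem f g hg]
    exact inl_le_inl f g (f.monotone (hg.reflects _ _ h))
  · rw [inRfun_not_mem f g r' h']
    by_cases hr : ∃ p, g p = r
    · obtain ⟨p, rfl⟩ := hr
      rw [inRfun_mem f g hg]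
      exact ⟨p, le_refl _, h⟩
    · rw [inRfun_not_mem f g r hr]
      exact h

lemma inRfun_reflects (hf : IsSieveEmbedding f) (hg : IsSieveEmbedding g)
    {r r' : R} (h : inRfun f g r ≤ inRfun f g r') : r ≤ r' := by
  by_cases h1 : ∃ p, g p = r
  · obtain ⟨p, rfl⟩ := h1
    rw [inRfun_mem f g hg] at h
    by_cases h2 : ∃ p', g p' = r'
    · obtain ⟨p', rfl⟩ := h2
      rw [inRfun_mem f g hg] at h
      exact g.monotone (hf.reflects _ _ (le_of_inl_le_inl f g h))
    · rw [inRfun_not_mem f g r' h2] at h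
      obtain ⟨p'', hp1, hp2⟩ := h
      exact le_trans (g.monotone (hf.reflects _ _ hp1)) hp2
  · rw [inRfun_not_mem f g r h1] at h
    by_cases h2 : ∃ p', g p' = r'
    · obtain ⟨p', rfl⟩ := h2
      rw [inRfun_mem f g hg] at h
      exact (not_inr_le_inl f g h).elim
    · rw [inRfun_not_mem f g r' h2] at h
      exact le_of_inr_le_inr f g h

lemma inRfun_inj (hf : IsSieveEmbedding f) (hg : IsSieveEmbedding g) :
    Function.Injective (inRfun f g) := fun a b hab =>
  le_antisymm (inRfun_reflects f g hf hg (le_of_eq hab))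
    (inRfun_reflects f g hf hg (le_of_eq hab.symm))


/-- Functor equality into a thin category. -/
lemma functor_ext_thin {A : Type*} [Category A] {D : Type*} [Preorder D] {F G : A ⥤ D}
    (h : ∀ x, F.obj x = G.obj x) : F = G :=
  CategoryTheory.Functor.ext h (fun _ _ _ => Subsingleton.elim _ _)

/-- In a thin category, homs are determined by endpoints. -/
lemma hom_conj {D : Type*} [Preorder D] {x x' y y' : D} (hx : x = x') (hy : y = y')
    (h : x ⟶ y) (h' : x' ⟶ y') : h = eqToHom hx ≫ h' ≫ eqToHom hy.symm := by
  subst hx; subst hy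
  simp [Subsingleton.elim h h']

section ToC

variable {C : Type u} [Category.{u} C] (u' : Q ⥤ C) (v : R ⥤ C)

lemma exists_lift (hf : IsSieveEmbedding f) {q : Q} {r} (h : inlM f g q ≤ inrM f g r) :
    ∃ p, f p = q ∧ g p ≤ r.1 := by
  obtain ⟨p, h1, h2⟩ := h
  obtain ⟨p', hp'⟩ := hf.sieve q p h1
  exact ⟨p', hp', le_trans (g.monotone (hf.reflects p' p ((le_of_eq hp').trans h1))) h2⟩

noncomputable def wit (hf : IsSieveEmbedding f) {q : Q} {r} (h : inlM f g q ≤ inrM f g r) : P :=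
  (exists_lift f g hf h).choose

lemma wit_f (hf : IsSieveEmbedding f) {q : Q} {r} (h : inlM f g q ≤ inrM f g r) :
    f (wit f g hf h) = q := (exists_lift f g hf h).choose_spec.1

lemma wit_g (hf : IsSieveEmbedding f) {q : Q} {r} (h : inlM f g q ≤ inrM f g r) :
    g (wit f g hf h) ≤ r.1 := (exists_lift f g hf h).choose_spec.2

lemma wit_eq (hf : IsSieveEmbedding f) {q : Q} {r} (h : inlM f g q ≤ inrM f g r)
    {p : P} (h1 : f p = q) : wit f g hf h = p :=
  hf.inj (by rw [wit_f, h1])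

lemma objEq (w : f.monotone.functor ⋙ u' = g.monotone.functor ⋙ v) (p : P) :
    u'.obj (f p) = v.obj (g p) := Functor.congr_obj w p

lemma wit_objEq (w : f.monotone.functor ⋙ u' = g.monotone.functor ⋙ v)
    (hf : IsSieveEmbedding f) {q : Q} {r} (h : inlM f g q ≤ inrM f g r) :
    u'.obj q = v.obj (g (wit f g hf h)) := by
  have := objEq f g u' v w (wit f g hf h)
  rwa [wit_f f g hf h] at this

lemma map_key (w : f.monotone.functor ⋙ u' = g.monotone.functor ⋙ v)
    {p p' : P} (hpp' : p ≤ p') :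
    u'.map (homOfLE (f.monotone hpp')) =
      eqToHom (objEq f g u' v w p) ≫ v.map (homOfLE (g.monotone hpp')) ≫
        eqToHom (objEq f g u' v w p').symm :=
  Functor.congr_hom w (homOfLE hpp')

/-- Object part of the functor from the model to `C`. -/
@[reducible] def toCobj : Mdl f g → C := fun z => match z with
  | .inl q => u'.obj q
  | .inr r => v.obj r.1

/-- Morphism part of the functor from the model to `C`. -/
noncomputable def toCmap (hf : IsSieveEmbedding f)
    (w : f.monotone.functor ⋙ u' = g.monotone.functor ⋙ v)
    {x y : Mdl f g} (h : x ⟶ y) : toCobj f g u' v x ⟶ toCobj f g u' v y :=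
  match x, y, h with
  | .inl _, .inl _, h => u'.map (homOfLE (le_of_inl_le_inl f g (leOfHom h)))
  | .inl _, .inr _, h => eqToHom (wit_objEq f g u' v w hf (leOfHom h)) ≫
      v.map (homOfLE (wit_g f g hf (leOfHom h)))
  | .inr _, .inl _, h => (not_inr_le_inl f g (leOfHom h)).elim
  | .inr _, .inr _, h => v.map (homOfLE (le_of_inr_le_inr f g (leOfHom h)))

variable (hf : IsSieveEmbedding f)
  (w : f.monotone.functor ⋙ u' = g.monotone.functor ⋙ v)

lemma toCmap_ll {q q' : Q} (hom : inlM f g q ⟶ inlM f g q') :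
    toCmap f g u' v hf w hom = u'.map (homOfLE (le_of_inl_le_inl f g (leOfHom hom))) := rfl

lemma toCmap_rr {r r'} (hom : inrM f g r ⟶ inrM f g r') :
    toCmap f g u' v hf w hom = v.map (homOfLE (le_of_inr_le_inr f g (leOfHom hom))) := rfl

lemma toCmap_lr {q : Q} {r} (p : P) (h1 : f p = q) (h2 : g p ≤ r.1)
    (hom : inlM f g q ⟶ inrM f g r) :
    toCmap f g u' v hf w hom =
      (eqToHom (show toCobj f g u' v (inlM f g q) = v.obj (g p) by
        show u'.obj q = _; rw [← h1]; exact objEq f g u' v w p) ≫ v.map (homOfLE h2) ≫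
        eqToHom (rfl : v.obj r.1 = toCobj f g u' v (inrM f g r))) := by
  have he : wit f g hf (leOfHom hom) = p := wit_eq f g hf _ h1
  subst he
  erw [eqToHom_refl, Category.comp_id]
  rfl

/-- The functor from the model to `C`. -/
noncomputable def toC : Mdl f g ⥤ C where
  obj := toCobj f g u' v
  map := toCmap f g u' v hf w
  map_id x := by
    cases x with
    | inl q =>
      exact (congrArg u'.map (Subsingleton.elim _ (𝟙 q))).trans (u'.map_id q)
    | inr r =>
      exact (congrArg v.map (Subsingleton.elim _ (𝟙 r.1))).trans (v.map_id r.1)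
  map_comp {x y z} h1 h2 := by
    cases x using Mdl.casesOn' with
    | inl q =>
      cases y using Mdl.casesOn' with
      | inl q' =>
        cases z using Mdl.casesOn' with
        | inl q'' =>
          exact (congrArg u'.map (Subsingleton.elim _ _)).trans (u'.map_comp _ _)
        | inr r =>
          have hp2f := wit_f f g hf (leOfHom h2)
          have hp2g := wit_g f g hf (leOfHom h2)
          have le1 : q ≤ q' := le_of_inl_le_inl f g (leOfHom h1)
          obtain ⟨p₁, hp₁⟩ := hf.sieve q (wit f g hf (leOfHom h2))
            (le1.trans (le_of_eq hp2f.symm))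
          have hpp : p₁ ≤ wit f g hf (leOfHom h2) :=
            hf.reflects _ _ ((le_of_eq hp₁).trans (le1.trans (le_of_eq hp2f.symm)))
          show toCmap f g u' v hf w (h1 ≫ h2) =
            toCmap f g u' v hf w h1 ≫ toCmap f g u' v hf w h2
          rw [toCmap_lr f g u' v hf w p₁ hp₁ (le_trans (g.monotone hpp) hp2g) (h1 ≫ h2),
            toCmap_lr f g u' v hf w (wit f g hf (leOfHom h2)) hp2f hp2g h2,
            toCmap_ll f g u' v hf w h1]
          subst hp₁
          rw [hom_conj rfl hp2f.symm (homOfLE le1) (homOfLE (f.monotone hpp))]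
          simp only [Functor.map_comp, eqToHom_map, eqToHom_refl, Category.id_comp,
            Category.assoc, Category.comp_id]
          rw [map_key f g u' v w hpp]
          simp only [Category.assoc, eqToHom_trans, eqToHom_refl, Category.id_comp,
            eqToHom_trans_assoc, Category.comp_id]
          rw [← v.map_comp]
          first
          | rfl
          | (congr 1; apply Subsingleton.elim)
      | inr r =>
        cases z using Mdl.casesOn' with
        | inl q'' => exact (not_inr_le_inl f g (leOfHom h2)).elim
        | inr r' =>
          have hp1f := wit_f f g hf (leOfHom h1)
          have hp1g := wit_g f g hf (leOfHom h1)
          show toCmap f g u' v hf w (h1 ≫ h2) =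
            toCmap f g u' v hf w h1 ≫ toCmap f g u' v hf w h2
          rw [toCmap_lr f g u' v hf w (wit f g hf (leOfHom h1)) hp1f
              (le_trans hp1g (le_of_inr_le_inr f g (leOfHom h2))) (h1 ≫ h2),
            toCmap_lr f g u' v hf w (wit f g hf (leOfHom h1)) hp1f hp1g h1,
            toCmap_rr f g u' v hf w h2]
          simp only [Category.assoc, eqToHom_refl, Category.id_comp, Category.comp_id]
          rw [← v.map_comp]
          first
          | rfl
          | (congr 1; apply Subsingleton.elim)
    | inr r =>
      cases y with
      | inl q' => exact (not_inr_le_inl f g (leOfHom h1)).elim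
      | inr r' =>
        cases z with
        | inl q'' => exact (not_inr_le_inl f g (leOfHom h2)).elim
        | inr r'' =>
          exact (congrArg v.map (Subsingleton.elim _ _)).trans (v.map_comp _ _)

lemma toC_map_ll {q q' : Q} (hom : inlM f g q ⟶ inlM f g q') :
    (toC f g u' v hf w).map hom =
      u'.map (homOfLE (le_of_inl_le_inl f g (leOfHom hom))) := rfl

lemma toC_map_rr {r r'} (hom : inrM f g r ⟶ inrM f g r') :
    (toC f g u' v hf w).map hom =
      v.map (homOfLE (le_of_inr_le_inr f g (leOfHom hom))) := rfl

lemma toC_map_lr {q : Q} {r} (p : P) (h1 : f p = q) (h2 : g p ≤ r.1)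
    (hom : inlM f g q ⟶ inrM f g r) :
    (toC f g u' v hf w).map hom =
      (eqToHom (show toCobj f g u' v (inlM f g q) = v.obj (g p) by
        show u'.obj q = _; rw [← h1]; exact objEq f g u' v w p) ≫ v.map (homOfLE h2) ≫
        eqToHom (rfl : v.obj r.1 = toCobj f g u' v (inrM f g r))) :=
  toCmap_lr f g u' v hf w p h1 h2 hom

lemma compQ : (inl_mono f g).functor ⋙ toC f g u' v hf w = u' := by
  refine CategoryTheory.Functor.hext (fun X => rfl) (fun X Y h => ?_)
  exact heq_of_eq (congrArg u'.map (Subsingleton.elim _ _))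

include w in
lemma compR_obj (hg : IsSieveEmbedding g) (r : R) :
    toCobj f g u' v (inRfun f g r) = v.obj r := by
  by_cases h : ∃ p, g p = r
  · obtain ⟨p, rfl⟩ := h
    rw [inRfun_mem f g hg]
    exact objEq f g u' v w p
  · rw [inRfun_not_mem f g r h]

lemma map_heq_thin {D : Type*} [Preorder D] {B : Type*} [Category B] (F : D ⥤ B)
    {x x' y y' : D} (hx : x = x') (hy : y = y') (k : x ⟶ y) (k' : x' ⟶ y') :
    HEq (F.map k) (F.map k') := by
  subst hx; subst hy; rw [Subsingleton.elim k k']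

lemma compR (hg : IsSieveEmbedding g) :
    (inRfun_mono f g hf hg).functor ⋙ toC f g u' v hf w = v := by
  refine CategoryTheory.Functor.hext (fun r => compR_obj f g u' v w hg r) (fun r r' h => ?_)
  dsimp only [Functor.comp_map]
  by_cases h1 : ∃ p, g p = r
  · obtain ⟨p, rfl⟩ := h1
    by_cases h2 : ∃ p', g p' = r'
    · obtain ⟨p', rfl⟩ := h2
      have hpp' : p ≤ p' := hg.reflects _ _ (leOfHom h)
      refine (map_heq_thin (toC f g u' v hf w) (inRfun_mem f g hg p) (inRfun_mem f g hg p') _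
        (homOfLE (inl_le_inl f g (f.monotone hpp')))).trans ?_
      refine (Functor.hcongr_hom w (homOfLE hpp')).trans ?_
      exact heq_of_eq (congrArg v.map (Subsingleton.elim _ _))
    · have hle : g p ≤ r' := leOfHom h
      refine (map_heq_thin (toC f g u' v hf w) (inRfun_mem f g hg p)
        (inRfun_not_mem f g r' h2) _
        (homOfLE (show inlM f g (f p) ≤ inrM f g ⟨r', h2⟩ from ⟨p, le_refl _, hle⟩))).trans ?_
      refine (heq_of_eq (toC_map_lr f g u' v hf w p rfl hle _)).trans ?_
      refine (eqToHom_comp_heq _ _).trans ((comp_eqToHom_heq _ _).trans ?_)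
      exact heq_of_eq (congrArg v.map (Subsingleton.elim _ _))
  · by_cases h2 : ∃ p', g p' = r'
    · exfalso
      obtain ⟨p', rfl⟩ := h2
      exact h1 (hg.sieve r p' (leOfHom h))
    · refine (map_heq_thin (toC f g u' v hf w) (inRfun_not_mem f g r h1)
        (inRfun_not_mem f g r' h2) _
        (homOfLE (show inrM f g ⟨r, h1⟩ ≤ inrM f g ⟨r', h2⟩ from (leOfHom h : r ≤ r')))).trans ?_
      exact heq_of_eq (congrArg v.map (Subsingleton.elim _ _))

end ToC

section CatLevel

variable (hf : IsSieveEmbedding f) (hg : IsSieveEmbedding g)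

/-- The inclusion `Q ⟶ Mdl` in `Cat`. -/
def inQF : Cat.of Q ⟶ Cat.of (Mdl f g) := (inl_mono f g).functor.toCatHom

/-- The inclusion `R ⟶ Mdl` in `Cat`. -/
noncomputable def inRF : Cat.of R ⟶ Cat.of (Mdl f g) := (inRfun_mono f g hf hg).functor.toCatHom

lemma wM : (show Cat.of P ⟶ Cat.of Q from f.monotone.functor.toCatHom) ≫ inQF f g =
    (show Cat.of P ⟶ Cat.of R from g.monotone.functor.toCatHom) ≫ inRF f g hf hg :=
  Cat.ext (functor_ext_thin (D := Mdl f g) (fun p => (inRfun_mem f g hg p).symm))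

end CatLevel

section Pointwise

variable (hf : IsSieveEmbedding f) (hg : IsSieveEmbedding g) (m : ℕ)

/-- All the vertices of a simplex lie in `Q`. -/
def allInl (F : ComposableArrows (Mdl f g) m) : Prop := ∀ j, ∃ q, F.obj j = inlM f g q

/-- All the vertices of a simplex lie in the image of `R`. -/
def allRg (F : ComposableArrows (Mdl f g) m) : Prop := ∀ j, ∃ r, inRfun f g r = F.obj j

/-- Lift a simplex with vertices in `Q` to `Q`. -/
noncomputable def liftQ (F : ComposableArrows (Mdl f g) m) (h : allInl f g m F) :
    ComposableArrows Q m :=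
  Monotone.functor (f := fun j => (h j).choose) (by
    intro j j' hj
    have hle := leOfHom (F.map (homOfLE hj))
    rw [(h j).choose_spec, (h j').choose_spec] at hle
    exact le_of_inl_le_inl f g hle)

lemma liftQ_comp (F : ComposableArrows (Mdl f g) m) (h : allInl f g m F) :
    liftQ f g m F h ⋙ (inl_mono f g).functor = F :=
  functor_ext_thin (fun j => ((h j).choose_spec).symm)

/-- Lift a simplex with vertices in the image of `R` to `R`. -/
noncomputable def liftR (F : ComposableArrows (Mdl f g) m) (h : allRg f g m F) :
    ComposableArrows R m :=
  Monotone.functor (f := fun j => (h j).choose) (by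
    intro j j' hj
    have hle := leOfHom (F.map (homOfLE hj))
    rw [← (h j).choose_spec, ← (h j').choose_spec] at hle
    exact inRfun_reflects f g hf hg hle)

lemma liftR_comp (F : ComposableArrows (Mdl f g) m) (h : allRg f g m F) :
    liftR f g hf hg m F h ⋙ (inRfun_mono f g hf hg).functor = F :=
  functor_ext_thin (fun j => (h j).choose_spec)

lemma range_g_of_inRfun_inl {r : R} {q : Q} (h : inRfun f g r = inlM f g q) :
    ∃ p, g p = r := by
  by_contra hc
  rw [inRfun_not_mem f g r hc] at h
  cases h

include hf hg in
lemma allRg_of_not_allInl (F : ComposableArrows (Mdl f g) m) (h : ¬ allInl f g m F) :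
    allRg f g m F := by
  have : ∃ j₀, ∀ q, F.obj j₀ ≠ inlM f g q := by
    by_contra hc
    push_neg at hc
    exact h (fun j => by
      obtain ⟨q, hq⟩ := hc j
      exact ⟨q, hq⟩)
  obtain ⟨j₀, hj₀⟩ := this
  obtain ⟨r₀, hr₀⟩ : ∃ r₀, F.obj j₀ = inrM f g r₀ := by
    cases hE : F.obj j₀ with
    | inl q => exact absurd hE (hj₀ q)
    | inr r => exact ⟨r, rfl⟩
  intro j
  cases hFj : F.obj j with
  | inr r => exact ⟨r.1, (inRfun_not_mem f g r.1 r.2).trans rfl⟩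
  | inl q =>
    rcases le_total j j₀ with hj | hj
    · have hle := leOfHom (F.map (homOfLE hj))
      rw [hFj, hr₀] at hle
      obtain ⟨p, hp1, hp2⟩ := hle
      obtain ⟨p', hp'⟩ := hf.sieve q p hp1
      exact ⟨g p', by rw [inRfun_mem f g hg, hp']⟩
    · have hle := leOfHom (F.map (homOfLE hj))
      rw [hFj, hr₀] at hle
      exact (not_inr_le_inl f g hle).elim

lemma nerve_app_eq {A B : Cat.{u, u}} (F : A ⟶ B) (k : SimplexCategoryᵒᵖ)
    (x : ComposableArrows A k.unop.len) :
    (nerveFunctor.{u, u}.map F).app k x = x ⋙ F.toFunctor := rfl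

/-- The pointwise pushout of nerves. -/
noncomputable def ptIsColimit (k : SimplexCategoryᵒᵖ)
    (comm : (nerveFunctor.{u, u}.map (show Cat.of P ⟶ Cat.of Q from f.monotone.functor.toCatHom)).app k ≫
        (nerveFunctor.map (inQF f g)).app k =
      (nerveFunctor.map (show Cat.of P ⟶ Cat.of R from g.monotone.functor.toCatHom)).app k ≫
        (nerveFunctor.map (inRF f g hf hg)).app k) :
    IsColimit (PushoutCocone.mk _ _ comm) := by
  refine PushoutCocone.IsColimit.mk comm
    (fun s => TypeCat.ofHom (fun F => @dite _ (allInl f g k.unop.len F) (Classical.dec _)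
      (fun h => s.inl (liftQ f g k.unop.len F h))
      (fun h => s.inr (liftR f g hf hg k.unop.len F
        (allRg_of_not_allInl f g hf hg k.unop.len F h)))))
    (fun s => ?_) (fun s => ?_) (fun s m' h1 h2 => ?_)
  · ext G
    have hall : allInl f g k.unop.len (G ⋙ (inl_mono f g).functor) :=
      fun j => ⟨G.obj j, rfl⟩
    simp only [types_comp_apply, TypeCat.Fun.toFun_apply, TypeCat.ofHom_apply]
    rw [show ((nerveFunctor.map (inQF f g)).app k G) = G ⋙ (inl_mono f g).functor from rfl,
      dif_pos hall]
    exact congrArg s.inl (functor_ext_thin (D := Q)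
      (fun j => Sum.inl.inj ((hall j).choose_spec).symm))
  · ext G
    simp only [types_comp_apply, TypeCat.Fun.toFun_apply, TypeCat.ofHom_apply]
    rw [show ((nerveFunctor.map (inRF f g hf hg)).app k G) =
      G ⋙ (inRfun_mono f g hf hg).functor from rfl]
    by_cases hall : allInl f g k.unop.len (G ⋙ (inRfun_mono f g hf hg).functor)
    · rw [dif_pos hall]
      have hrange : ∀ j, ∃ p, g p = G.obj j := fun j =>
        range_g_of_inRfun_inl f g ((hall j).choose_spec)
      have hmono : Monotone (fun j => (hrange j).choose) := by
        intro j j' hj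
        refine hg.reflects _ _ ?_
        rw [(hrange j).choose_spec, (hrange j').choose_spec]
        exact leOfHom (G.map (homOfLE hj))
      have key1 : hmono.functor ⋙ f.monotone.functor = liftQ f g k.unop.len _ hall := by
        refine functor_ext_thin (D := Q) (fun j => ?_)
        have h1 : inlM f g (f ((hrange j).choose)) =
            inlM f g ((liftQ f g k.unop.len _ hall).obj j) := by
          rw [← inRfun_mem f g hg ((hrange j).choose), (hrange j).choose_spec]
          exact (hall j).choose_spec
        exact Sum.inl.inj h1
      have key2 : hmono.functor ⋙ g.monotone.functor = G :=
        functor_ext_thin (fun j => (hrange j).choose_spec)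
      have hc := types_congr_hom s.condition hmono.functor
      simp only [types_comp_apply] at hc
      exact (congrArg s.inl key1.symm).trans (hc.trans (congrArg s.inr key2))
    · rw [dif_neg hall]
      exact congrArg s.inr (functor_ext_thin (D := R) (fun j => inRfun_inj f g hf hg
        ((allRg_of_not_allInl f g hf hg k.unop.len _ hall j).choose_spec)))
  · ext F
    simp only [TypeCat.Fun.toFun_apply, TypeCat.ofHom_apply]
    by_cases h : allInl f g k.unop.len F
    · rw [dif_pos h]
      have hc := types_congr_hom h1 (liftQ f g k.unop.len F h)
      simp only [types_comp_apply] at hc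
      exact (congrArg (fun x => m' x) (liftQ_comp f g k.unop.len F h).symm).trans hc
    · rw [dif_neg h]
      have hR := allRg_of_not_allInl f g hf hg k.unop.len F h
      have hc := types_congr_hom h2 (liftR f g hf hg k.unop.len F hR)
      simp only [types_comp_apply] at hc
      exact (congrArg (fun x => m' x) (liftR_comp f g hf hg k.unop.len F hR).symm).trans hc

include hf hg in
lemma modelPushout :
    IsPushout (nerveFunctor.{u, u}.map (show Cat.of P ⟶ Cat.of Q from f.monotone.functor.toCatHom))
      (nerveFunctor.map (show Cat.of P ⟶ Cat.of R from g.monotone.functor.toCatHom))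
      (nerveFunctor.map (inQF f g)) (nerveFunctor.map (inRF f g hf hg)) := by
  have wN : nerveFunctor.{u, u}.map (show Cat.of P ⟶ Cat.of Q from f.monotone.functor.toCatHom) ≫
      nerveFunctor.map (inQF f g) =
      nerveFunctor.map (show Cat.of P ⟶ Cat.of R from g.monotone.functor.toCatHom) ≫
      nerveFunctor.map (inRF f g hf hg) := by
    rw [← Functor.map_comp, ← Functor.map_comp, wM f g hf hg]
  refine IsPushout.of_isColimit' ⟨wN⟩ ?_
  refine evaluationJointlyReflectsColimits _ (fun k => ?_)
  exact (isColimitMapCoconePushoutCoconeEquiv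
    ((evaluation SimplexCategoryᵒᵖ (Type u)).obj k) wN).symm
    (ptIsColimit f g hf hg k (congr_app wN k))

end Pointwise

end SievePushoutAux

open SievePushoutAux in
theorem nerve_preserves_pushout_of_sieves'
    {P Q R : Type u} [PartialOrder P] [PartialOrder Q] [PartialOrder R]
    (f : P →o Q) (g : P →o R) (hf : IsSieveEmbedding f) (hg : IsSieveEmbedding g)
    (C : Cat.{u, u}) (u' : Cat.of Q ⟶ C) (v : Cat.of R ⟶ C)
    (sq : IsPushout (show Cat.of P ⟶ Cat.of Q from f.monotone.functor.toCatHom)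
      (show Cat.of P ⟶ Cat.of R from g.monotone.functor.toCatHom) u' v) :
    IsPushout (nerveFunctor.{u, u}.map (show Cat.of P ⟶ Cat.of Q from f.monotone.functor.toCatHom))
      (nerveFunctor.{u, u}.map (show Cat.of P ⟶ Cat.of R from g.monotone.functor.toCatHom))
      (nerveFunctor.{u, u}.map u') (nerveFunctor.{u, u}.map v) := by
  have hw : f.monotone.functor ⋙ u'.toFunctor = g.monotone.functor ⋙ v.toFunctor :=
    congrArg Cat.Hom.toFunctor sq.w
  let mm : Cat.of (Mdl f g) ⟶ C := (toC f g u'.toFunctor v.toFunctor hf hw).toCatHom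
  let kk : C ⟶ Cat.of (Mdl f g) := sq.desc (inQF f g) (inRF f g hf hg) (wM f g hf hg)
  have hQ : inQF f g ≫ mm = u' := Cat.ext (compQ f g u'.toFunctor v.toFunctor hf hw)
  have hR : inRF f g hf hg ≫ mm = v := Cat.ext (compR f g u'.toFunctor v.toFunctor hf hw hg)
  have hmk : mm ≫ kk = 𝟙 (Cat.of (Mdl f g)) := by
    refine Cat.ext (functor_ext_thin (D := Mdl f g) (fun z => ?_))
    cases z with
    | inl q =>
      exact Functor.congr_obj (congrArg Cat.Hom.toFunctor
        (sq.inl_desc (inQF f g) (inRF f g hf hg) (wM f g hf hg))) q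
    | inr r =>
      exact (Functor.congr_obj (congrArg Cat.Hom.toFunctor
        (sq.inr_desc (inQF f g) (inRF f g hf hg) (wM f g hf hg))) r.1).trans
        ((inRfun_not_mem f g r.1 r.2).trans rfl)
  have hkm : kk ≫ mm = 𝟙 C := by
    refine sq.hom_ext ?_ ?_
    · rw [← Category.assoc, sq.inl_desc, Category.comp_id]
      exact hQ
    · rw [← Category.assoc, sq.inr_desc, Category.comp_id]
      exact hR
  let e : Cat.of (Mdl f g) ≅ C := ⟨mm, kk, hmk, hkm⟩
  refine (modelPushout f g hf hg).of_iso (Iso.refl _) (Iso.refl _) (Iso.refl _)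
    (nerveFunctor.mapIso e) ((Category.comp_id _).trans (Category.id_comp _).symm)
    ((Category.comp_id _).trans (Category.id_comp _).symm) ?_ ?_
  · simp only [Iso.refl_hom, Category.id_comp, Functor.mapIso_hom]
    rw [← nerveFunctor.map_comp]
    exact congrArg nerveFunctor.map hQ
  · simp only [Iso.refl_hom, Category.id_comp, Functor.mapIso_hom]
    rw [← nerveFunctor.map_comp]
    exact congrArg nerveFunctor.map hR

/-- If both legs of a cocartesian square of posets (computed in `Cat`) are sieve
embeddings, then the nerve functor preserves the pushout: the induced square of nerves is
cocartesian in simplicial sets. -/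
theorem nerve_preserves_pushout_of_sieves
    {P Q R : Type u} [PartialOrder P] [PartialOrder Q] [PartialOrder R]
    (f : P →o Q) (g : P →o R) (hf : IsSieveEmbedding f) (hg : IsSieveEmbedding g)
    (C : Cat.{u, u}) (u' : Cat.of Q ⟶ C) (v : Cat.of R ⟶ C)
    (sq : IsPushout (show Cat.of P ⟶ Cat.of Q from f.monotone.functor.toCatHom)
      (show Cat.of P ⟶ Cat.of R from g.monotone.functor.toCatHom) u' v) :
    IsPushout (nerveFunctor.{u, u}.map (show Cat.of P ⟶ Cat.of Q from f.monotone.functor.toCatHom))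
      (nerveFunctor.{u, u}.map (show Cat.of P ⟶ Cat.of R from g.monotone.functor.toCatHom))
      (nerveFunctor.{u, u}.map u') (nerveFunctor.{u, u}.map v) :=
  nerve_preserves_pushout_of_sieves' f g hf hg C u' v sq
end

section
/- The inclusion of the category of posets into the category of small categories preserves colimits of (possibly transfinite) sequences. -/
/-!
For a directed diagram `F` of posets, represent elements of the colimit by pairs `(j, x)` with
`x ∈ F j`, and put `(j, x) ≤ (k, y)` when the two become comparable at some common later stage.
Directedness makes this relation transitive, so the colimit poset is the antisymmetrization of
this preorder. A cocone in `Cat` with legs `T_j` induces a functor out of the preorder: an arrow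
witnessed at stage `m` goes to the image under `T_m` of the comparison there, and this does not
depend on `m` because the legs are strictly compatible. Equivalent pairs become equal at some
stage, so the functor sends the arrows between them to identities and descends to the
antisymmetrization. Colimits in `PartOrd` are then reflected along the fully faithful inclusion.
-/

open CategoryTheory Limits

universe u

namespace CategoryTheory.Functor

variable {P X C : Type*} [Preorder P] [Category X] [Category C]

lemma map_homOfLE_congr (E : P ⥤ C) {a a' b b' : P} (ha : a = a') (hb : b = b')
    (h : a ≤ b) (h' : a' ≤ b') :
    E.map (homOfLE h) =
      eqToHom (congrArg E.obj ha) ≫ E.map (homOfLE h') ≫ eqToHom (congrArg E.obj hb).symm := by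
  subst ha hb
  simp

/-- Such functors are exactly those that factor strictly through the antisymmetrization. -/
def CollapsesAntisymmRel (E : P ⥤ C) : Prop :=
  ∀ ⦃a b : P⦄ (h : a ≤ b), b ≤ a → ∃ e, E.map (homOfLE h) = eqToHom e

lemma CollapsesAntisymmRel.comp_eq_comp {E : P ⥤ C} (hE : E.CollapsesAntisymmRel)
    {u v : X ⥤ P} (huv : ∀ x, AntisymmRel (· ≤ ·) (u.obj x) (v.obj x)) : u ⋙ E = v ⋙ E := by
  choose e he using fun x => hE (huv x).le (huv x).ge
  refine Functor.ext e fun x y f => ?_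
  have hsq : u.map f ≫ homOfLE (huv y).le = homOfLE (huv x).le ≫ v.map f :=
    Subsingleton.elim _ _
  have hEsq := congrArg E.map hsq
  rw [E.map_comp, E.map_comp, he, he] at hEsq
  rw [Functor.comp_map, Functor.comp_map, ← cancel_mono (eqToHom (e y)), hEsq]
  simp

lemma collapsesAntisymmRel_toAntisymmetrization_comp (Ψ : Antisymmetrization P (· ≤ ·) ⥤ C) :
    ((toAntisymmetrization_mono (α := P)).functor ⋙ Ψ).CollapsesAntisymmRel := by
  intro a b h h'
  have e : toAntisymmetrization (· ≤ ·) a = toAntisymmetrization (· ≤ ·) b :=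
    _root_.Quotient.sound ⟨h, h'⟩
  exact ⟨congrArg Ψ.obj e, (congrArg Ψ.map (Subsingleton.elim _ (eqToHom e))).trans
    (eqToHom_map Ψ e)⟩

end CategoryTheory.Functor

lemma ofAntisymmetrization_mono {P : Type*} [Preorder P] :
    Monotone (ofAntisymmetrization (α := P) (· ≤ ·)) :=
  fun _ _ => ofAntisymmetrization_le_ofAntisymmetrization_iff.mpr

lemma ofAntisymmetrization_functor_comp_toAntisymmetrization_functor {P : Type*} [Preorder P] :
    (ofAntisymmetrization_mono (P := P)).functor ⋙ toAntisymmetrization_mono.functor = 𝟭 _ :=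
  CategoryTheory.Functor.ext (toAntisymmetrization_ofAntisymmetrization _) fun _ _ _ =>
    Subsingleton.elim _ _

namespace PartOrd.DirectedColimit

variable {J : Type u} [Preorder J] {F : J ⥤ PartOrd.{u}}

variable (F) in
structure Elem where
  stage : J
  val : F.obj stage

abbrev Elem.push (a : Elem F) {k : J} (h : a.stage ≤ k) : F.obj k := F.map (homOfLE h) a.val

lemma Elem.push_push (a : Elem F) {k k' : J} (h : a.stage ≤ k) (hk : k ≤ k') :
    F.map (homOfLE hk) (a.push h) = a.push (h.trans hk) := by
  rw [Elem.push, Elem.push, ← ConcreteCategory.comp_apply, ← F.map_comp]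
  rfl

lemma Elem.push_refl (a : Elem F) : a.push le_rfl = a.val := by
  change F.map (𝟙 _) a.val = a.val
  rw [F.map_id]
  rfl

lemma Elem.push_le_push_of_le {a b : Elem F} {k k' : J} {ha : a.stage ≤ k} {hb : b.stage ≤ k}
    (h : a.push ha ≤ b.push hb) (hk : k ≤ k') : a.push (ha.trans hk) ≤ b.push (hb.trans hk) := by
  rw [← Elem.push_push a ha hk, ← Elem.push_push b hb hk]
  exact (F.map (homOfLE hk)).hom.monotone h

variable [IsDirected J (· ≤ ·)]

instance : Preorder (Elem F) where
  le a b := ∃ k, ∃ (ha : a.stage ≤ k) (hb : b.stage ≤ k), a.push ha ≤ b.push hb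
  le_refl a := ⟨a.stage, le_rfl, le_rfl, le_rfl⟩
  le_trans a b c := by
    rintro ⟨k₁, ha, hb, hab⟩ ⟨k₂, hb', hc, hbc⟩
    obtain ⟨k, hk₁, hk₂⟩ := directed_of (· ≤ ·) k₁ k₂
    exact ⟨k, _, _, (Elem.push_le_push_of_le hab hk₁).trans (Elem.push_le_push_of_le hbc hk₂)⟩

lemma Elem.mk_monotone (j : J) : Monotone (Elem.mk (F := F) j) :=
  fun _ _ h => ⟨j, le_rfl, le_rfl, (F.map (homOfLE le_rfl)).hom.monotone h⟩

lemma Elem.antisymmRel_mk_push (a : Elem F) {k : J} (h : a.stage ≤ k) :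
    AntisymmRel (· ≤ ·) ⟨k, a.push h⟩ a :=
  ⟨⟨k, le_rfl, h, (Elem.push_push a h le_rfl).le⟩, ⟨k, h, le_rfl, (Elem.push_push a h le_rfl).ge⟩⟩

lemma Elem.exists_push_eq_of_antisymmRel {a b : Elem F} (h : AntisymmRel (· ≤ ·) a b) :
    ∃ k, ∃ (ha : a.stage ≤ k) (hb : b.stage ≤ k), a.push ha = b.push hb := by
  obtain ⟨⟨k₁, ha, hb, hab⟩, ⟨k₂, hb', ha', hba⟩⟩ := h
  obtain ⟨k, hk₁, hk₂⟩ := directed_of (· ≤ ·) k₁ k₂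
  exact ⟨k, _, _, le_antisymm (Elem.push_le_push_of_le hab hk₁) (Elem.push_le_push_of_le hba hk₂)⟩

variable (F) in
def cocone : Cocone F where
  pt := PartOrd.of (Antisymmetrization (Elem F) (· ≤ ·))
  ι.app j := PartOrd.ofHom ⟨_, toAntisymmetrization_mono.comp (Elem.mk_monotone j)⟩
  ι.naturality j k f := by
    ext x
    exact Quotient.sound (Elem.antisymmRel_mk_push ⟨j, x⟩ (leOfHom f))

end PartOrd.DirectedColimit

namespace PartOrd.DirectedColimit

variable {J : Type u} [Preorder J] {F : J ⥤ PartOrd.{u}}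
  (t : Cocone (F ⋙ forget₂ PartOrd Preord ⋙ preordToCat))

def leg (j : J) : F.obj j ⥤ t.pt := (t.ι.app j).toFunctor

lemma transition_functor_comp_leg {i j : J} (h : i ≤ j) :
    (F.map (homOfLE h)).hom.monotone.functor ⋙ leg t j = leg t i :=
  congrArg Cat.Hom.toFunctor (t.w (homOfLE h))

lemma leg_obj_push (a : Elem F) {k : J} (h : a.stage ≤ k) :
    (leg t k).obj (a.push h) = (leg t a.stage).obj a.val :=
  Functor.congr_obj (transition_functor_comp_leg t h) a.val

lemma leg_map_eq {i j : J} (hij : i ≤ j) {x y : F.obj i} (h : x ≤ y) :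
    (leg t i).map (homOfLE h) = eqToHom (leg_obj_push t ⟨i, x⟩ hij).symm ≫
      (leg t j).map (homOfLE ((F.map (homOfLE hij)).hom.monotone h)) ≫
      eqToHom (leg_obj_push t ⟨i, y⟩ hij) :=
  Functor.congr_hom (transition_functor_comp_leg t hij).symm (homOfLE h)

def homAt (a b : Elem F) {k : J} (ha : a.stage ≤ k) (hb : b.stage ≤ k)
    (h : a.push ha ≤ b.push hb) : (leg t a.stage).obj a.val ⟶ (leg t b.stage).obj b.val :=
  eqToHom (leg_obj_push t a ha).symm ≫ (leg t k).map (homOfLE h) ≫ eqToHom (leg_obj_push t b hb)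

lemma homAt_eq_homAt_of_le {a b : Elem F} {k k' : J} {ha : a.stage ≤ k} {hb : b.stage ≤ k}
    (h : a.push ha ≤ b.push hb) (hk : k ≤ k') :
    homAt t a b ha hb h = homAt t a b _ _ (Elem.push_le_push_of_le h hk) := by
  simp only [homAt, leg_map_eq t hk h, Functor.map_homOfLE_congr _ (a.push_push ha hk)
    (b.push_push hb hk) _ (Elem.push_le_push_of_le h hk), Category.assoc, eqToHom_trans,
    eqToHom_trans_assoc]

lemma homAt_comp {a b c : Elem F} {k : J} {ha : a.stage ≤ k} {hb : b.stage ≤ k}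
    {hc : c.stage ≤ k} (hab : a.push ha ≤ b.push hb) (hbc : b.push hb ≤ c.push hc) :
    homAt t a b ha hb hab ≫ homAt t b c hb hc hbc = homAt t a c ha hc (hab.trans hbc) := by
  simp only [homAt, Category.assoc, eqToHom_trans_assoc, eqToHom_refl, Category.id_comp,
    ← Functor.map_comp_assoc]
  rfl

lemma homAt_mk_mk {j : J} {x y : F.obj j} (h : x ≤ y) :
    homAt t ⟨j, x⟩ ⟨j, y⟩ le_rfl le_rfl ((F.map (homOfLE le_rfl)).hom.monotone h) =
      (leg t j).map (homOfLE h) := by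
  rw [homAt, Functor.map_homOfLE_congr _ (Elem.push_refl ⟨j, x⟩) (Elem.push_refl ⟨j, y⟩) _ h]
  simp

variable [IsDirected J (· ≤ ·)]

lemma homAt_eq_homAt {a b : Elem F} {k k' : J} {ha : a.stage ≤ k} {hb : b.stage ≤ k}
    {ha' : a.stage ≤ k'} {hb' : b.stage ≤ k'} (h : a.push ha ≤ b.push hb)
    (h' : a.push ha' ≤ b.push hb') : homAt t a b ha hb h = homAt t a b ha' hb' h' := by
  obtain ⟨l, hl, hl'⟩ := directed_of (· ≤ ·) k k'
  rw [homAt_eq_homAt_of_le t h hl, homAt_eq_homAt_of_le t h' hl']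

noncomputable def elemFunctor : Elem F ⥤ t.pt where
  obj a := (leg t a.stage).obj a.val
  map {a b} f := homAt t a b f.le.choose_spec.fst f.le.choose_spec.snd.fst
    f.le.choose_spec.snd.snd
  map_id a := by
    rw [homAt_eq_homAt t _ (le_refl (a.push le_rfl))]
    simp [homAt]
  map_comp {a b c} f g := by
    obtain ⟨k₁, ha, hb, hab⟩ := f.le
    obtain ⟨k₂, hb', hc, hbc⟩ := g.le
    obtain ⟨k, hk₁, hk₂⟩ := directed_of (· ≤ ·) k₁ k₂
    rw [homAt_eq_homAt t _ (Elem.push_le_push_of_le hab hk₁),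
      homAt_eq_homAt t _ (Elem.push_le_push_of_le hbc hk₂), homAt_comp,
      homAt_eq_homAt t _
        ((Elem.push_le_push_of_le hab hk₁).trans (Elem.push_le_push_of_le hbc hk₂))]

lemma elemFunctor_map {a b : Elem F} (f : a ⟶ b) {k : J} (ha : a.stage ≤ k) (hb : b.stage ≤ k)
    (h : a.push ha ≤ b.push hb) : (elemFunctor t).map f = homAt t a b ha hb h :=
  homAt_eq_homAt t _ h

lemma elemFunctor_collapsesAntisymmRel : (elemFunctor t).CollapsesAntisymmRel := by
  intro a b hab hba
  obtain ⟨k, ha, hb, e⟩ := Elem.exists_push_eq_of_antisymmRel ⟨hab, hba⟩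
  refine ⟨(leg_obj_push t a ha).symm.trans (e ▸ leg_obj_push t b hb),
    (elemFunctor_map t (homOfLE hab) ha hb e.le).trans ?_⟩
  simp only [homAt, homOfLE_leOfHom, Functor.map_homOfLE_congr _ e rfl e.le le_rfl,
    homOfLE_refl, CategoryTheory.Functor.map_id, eqToHom_refl, Category.comp_id, eqToHom_trans]
  rfl

lemma mk_functor_comp_elemFunctor (j : J) :
    (Elem.mk_monotone j).functor ⋙ elemFunctor t = leg t j :=
  CategoryTheory.Functor.ext (fun _ => rfl) fun _ _ f =>
    ((elemFunctor_map t ((Elem.mk_monotone j).functor.map f) _ _ _).trans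
      (homAt_mk_mk t f.le)).trans (by
        erw [eqToHom_refl, eqToHom_refl, Category.id_comp, Category.comp_id]
        rfl)

lemma eq_elemFunctor (E : Elem F ⥤ t.pt) (hE : E.CollapsesAntisymmRel)
    (hleg : ∀ j, (Elem.mk_monotone j).functor ⋙ E = leg t j) : E = elemFunctor t := by
  refine CategoryTheory.Functor.ext (fun a => Functor.congr_obj (hleg a.stage) a.val)
    fun a b f => ?_
  obtain ⟨k, ha, hb, h⟩ := f.le
  have hf : f = homOfLE (Elem.antisymmRel_mk_push a ha).ge ≫
      homOfLE (Elem.mk_monotone k h) ≫ homOfLE (Elem.antisymmRel_mk_push b hb).le :=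
    Subsingleton.elim _ _
  have e₁ : E.obj ⟨k, a.push ha⟩ = (leg t k).obj (a.push ha) := Functor.congr_obj (hleg k) _
  have e₂ : E.obj ⟨k, b.push hb⟩ = (leg t k).obj (b.push hb) := Functor.congr_obj (hleg k) _
  have hmid : E.map (homOfLE (Elem.mk_monotone k h)) =
      eqToHom e₁ ≫ (leg t k).map (homOfLE h) ≫ eqToHom e₂.symm :=
    Functor.congr_hom (hleg k) (homOfLE h)
  obtain ⟨ea, hea⟩ := hE (Elem.antisymmRel_mk_push a ha).ge (Elem.antisymmRel_mk_push a ha).le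
  obtain ⟨eb, heb⟩ := hE (Elem.antisymmRel_mk_push b hb).le (Elem.antisymmRel_mk_push b hb).ge
  rw [elemFunctor_map t f ha hb h, hf, E.map_comp, E.map_comp, hea, hmid, heb]
  simp only [homAt, Category.assoc, eqToHom_trans_assoc]
  erw [Category.assoc, Category.assoc, eqToHom_trans_assoc, eqToHom_trans, eqToHom_trans]

noncomputable def isColimitMapCocone :
    IsColimit ((forget₂ PartOrd Preord ⋙ preordToCat).mapCocone (cocone F)) where
  desc t := (ofAntisymmetrization_mono.functor ⋙ elemFunctor t).toCatHom
  fac t j := Cat.ext <| show ((Elem.mk_monotone j).functor ⋙ toAntisymmetrization_mono.functor ⋙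
      ofAntisymmetrization_mono.functor) ⋙ elemFunctor t = leg t j from
    ((elemFunctor_collapsesAntisymmRel t).comp_eq_comp fun x =>
      Quotient.mk_out (s := AntisymmRel.setoid _ _) (⟨j, x⟩ : Elem F)).trans
      (mk_functor_comp_elemFunctor t j)
  uniq t Ψ hΨ := Cat.ext <| by
    have h : toAntisymmetrization_mono.functor ⋙ Ψ.toFunctor = elemFunctor t :=
      eq_elemFunctor t _ (Functor.collapsesAntisymmRel_toAntisymmetrization_comp _) fun j =>
        congrArg Cat.Hom.toFunctor (hΨ j)
    exact (congrArg (· ⋙ Ψ.toFunctor)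
      ofAntisymmetrization_functor_comp_toAntisymmetrization_functor).symm.trans
      (congrArg (ofAntisymmetrization_mono.functor ⋙ ·) h)

end PartOrd.DirectedColimit

instance : (forget₂ PartOrd.{u} Preord.{u}).Full where
  map_surjective f := ⟨PartOrd.ofHom f.hom, rfl⟩

instance PartOrd.preservesColimitsOfShape_forget₂_comp_preordToCat_of_isDirected {J : Type u}
    [Preorder J] [IsDirected J (· ≤ ·)] :
    PreservesColimitsOfShape J (forget₂ PartOrd.{u} Preord.{u} ⋙ preordToCat.{u}) where
  preservesColimit {F} :=
    preservesColimit_of_preserves_colimit_cocone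
      (isColimitOfReflects _ (PartOrd.DirectedColimit.isColimitMapCocone (F := F)))
      (PartOrd.DirectedColimit.isColimitMapCocone (F := F))

theorem partOrd_to_cat_preserves_sequential_colimits_general
    (lam : Type u) [LinearOrder lam] :
    Nonempty (PreservesColimitsOfShape lam
      (forget₂ PartOrd.{u} Preord.{u} ⋙ preordToCat.{u})) :=
  ⟨inferInstance⟩

/-- The inclusion of the category of posets into the category of small categories
preserves colimits of (possibly transfinite) sequences, i.e. colimits of shape `λ` for
every well-ordered `λ`. -/
theorem partOrd_to_cat_preserves_sequential_colimits
    (lam : Type u) [LinearOrder lam] [IsWellOrder lam (· < ·)] :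
    Nonempty (PreservesColimitsOfShape lam
      (forget₂ PartOrd.{u} Preord.{u} ⋙ preordToCat.{u})) :=
  partOrd_to_cat_preserves_sequential_colimits_general lam
end
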